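/- There exists ρ ∈ (0,1) such that for all n ≥ 1, both P[S_n ≤ 0] ≤ ρ^n and P[S̄_n > 0] ≤ ρ^n. -/

import Mathlib

/-!
Chernoff's bound with exponent `1/2`. For `Sₙ`, `P[Sₙ ≤ 0] ≤ E[exp(-Sₙ/2)]`, and for `S̄ₙ`,
`P[S̄ₙ > 0] ≤ E[exp(S̄ₙ/2)]`; both expectations factor over the `n` independent coordinates and
each factor equals the Bhattacharyya coefficient `ρ = ∑_{x,y} P_X(x) √(W(y|x) P_Y(y))` of
`P_{XY}` and `P_X ⊗ P_Y`. By AM-GM, `√(W(y|x) P_Y(y)) ≤ (W(y|x) + P_Y(y))/2`, so `ρ ≤ 1`, with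
strict inequality since `W(·|x) ≠ P_Y` for some `x` when `C > 0`.
-/

open MeasureTheory ProbabilityTheory

/-- Output marginal `P_Y(y) = Σ_x P_X(x) W(y|x)`. -/
noncomputable def outDist {𝒳 𝒴 : Type*} [Fintype 𝒳] (pX : 𝒳 → ℝ) (W : 𝒳 → 𝒴 → ℝ)
    (y : 𝒴) : ℝ := ∑ x, pX x * W x y

/-- Information density `i(x;y) = log (W(y|x) / P_Y(y))`. -/
noncomputable def infoDen {𝒳 𝒴 : Type*} [Fintype 𝒳] (pX : 𝒳 → ℝ) (W : 𝒳 → 𝒴 → ℝ)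
    (x : 𝒳) (y : 𝒴) : ℝ := Real.log (W x y / outDist pX W y)

namespace Real

lemma two_mul_sqrt_mul_le_add {a b : ℝ} (ha : 0 ≤ a) (hb : 0 ≤ b) :
    2 * √(a * b) ≤ a + b := by
  rw [sqrt_mul ha]
  nlinarith [sq_sqrt ha, sq_sqrt hb, sq_nonneg (√a - √b)]

lemma two_mul_sqrt_mul_lt_add {a b : ℝ} (ha : 0 ≤ a) (hb : 0 ≤ b) (hab : a ≠ b) :
    2 * √(a * b) < a + b := by
  have hsqrt : √a - √b ≠ 0 := sub_ne_zero.2 fun h => hab <| by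
    rw [← sq_sqrt ha, ← sq_sqrt hb, h]
  rw [sqrt_mul ha]
  nlinarith [sq_sqrt ha, sq_sqrt hb, sq_pos_of_ne_zero hsqrt]

lemma mul_exp_half_log_div {a b : ℝ} (ha : 0 < a) (hb : 0 < b) :
    a * exp (log (b / a) / 2) = √(a * b) := by
  have hexp : exp (log (b / a) / 2) = √(b / a) := by
    rw [sqrt_eq_rpow, rpow_def_of_pos (div_pos hb ha), div_eq_mul_one_div]
  rw [hexp, sqrt_div' _ ha.le, sqrt_mul ha.le, mul_div_left_comm, div_sqrt, mul_comm]

lemma sum_sqrt_mul_le_one {ι : Type*} [Fintype ι] {a b : ι → ℝ} (ha : ∀ i, 0 ≤ a i)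
    (hb : ∀ i, 0 ≤ b i) (ha1 : ∑ i, a i = 1) (hb1 : ∑ i, b i = 1) :
    ∑ i, √(a i * b i) ≤ 1 := by
  have h := Finset.sum_le_sum fun i (_ : i ∈ Finset.univ) =>
    two_mul_sqrt_mul_le_add (ha i) (hb i)
  rw [← Finset.mul_sum, Finset.sum_add_distrib, ha1, hb1] at h
  linarith

lemma sum_sqrt_mul_lt_one {ι : Type*} [Fintype ι] {a b : ι → ℝ} (ha : ∀ i, 0 ≤ a i)
    (hb : ∀ i, 0 ≤ b i) (ha1 : ∑ i, a i = 1) (hb1 : ∑ i, b i = 1) (hab : a ≠ b) :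
    ∑ i, √(a i * b i) < 1 := by
  obtain ⟨i₀, hi₀⟩ := Function.ne_iff.1 hab
  have h := Finset.sum_lt_sum (fun i (_ : i ∈ Finset.univ) =>
    two_mul_sqrt_mul_le_add (ha i) (hb i))
    ⟨i₀, Finset.mem_univ _, two_mul_sqrt_mul_lt_add (ha i₀) (hb i₀) hi₀⟩
  rw [← Finset.mul_sum, Finset.sum_add_distrib, ha1, hb1] at h
  linarith

end Real

namespace ProbabilityTheory

variable {Ω : Type*} [MeasurableSpace Ω] {μ : Measure Ω}

lemma iIndepFun.measure_forall_fin_mem {β : Type*} [MeasurableSpace β] {Z : ℕ → Ω → β}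
    (hZ : iIndepFun Z μ) (n : ℕ) {s : Fin n → Set β} (hs : ∀ k, MeasurableSet (s k)) :
    μ {ω | ∀ k : Fin n, Z k ω ∈ s k} = ∏ k : Fin n, μ (Z k ⁻¹' s k) := by
  have := (hZ.precomp Fin.val_injective).measure_inter_preimage_eq_mul Finset.univ
    (sets := s) fun k _ => hs k
  simp only [Finset.mem_univ, Set.iInter_true] at this
  rw [Set.ofPred_forall]
  exact this

lemma iIndepFun.measure_forall_fin_mem_le {β : Type*} [MeasurableSpace β] {Z : ℕ → Ω → β}
    (hZ : iIndepFun Z μ) {n : ℕ} {s : Fin n → Set β} (hs : ∀ k, MeasurableSet (s k))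
    {r : Fin n → ℝ} (hr : ∀ k, 0 ≤ r k)
    (hlaw : ∀ k : Fin n, μ (Z k ⁻¹' s k) ≤ ENNReal.ofReal (r k)) :
    μ {ω | ∀ k : Fin n, Z k ω ∈ s k} ≤ ENNReal.ofReal (∏ k, r k) := by
  rw [hZ.measure_forall_fin_mem n hs, ENNReal.ofReal_prod_of_nonneg fun k _ => hr k]
  exact Finset.prod_le_prod' fun k _ => hlaw k

/-- Chernoff's bound as a union bound over the cylinders `{Z = c}`: on those meeting the event,
`exp (∑ g (c k)) ≥ 1`. -/
lemma measure_sum_nonneg_le_of_cylinder {α : Type*} [Fintype α] {n : ℕ} {Z : Fin n → Ω → α}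
    {p : α → ℝ} (hp : ∀ a, 0 ≤ p a)
    (hcyl : ∀ c : Fin n → α, μ {ω | ∀ k, Z k ω = c k} ≤ ENNReal.ofReal (∏ k, p (c k)))
    (g : α → ℝ) :
    μ {ω | 0 ≤ ∑ k, g (Z k ω)} ≤ ENNReal.ofReal ((∑ a, p a * Real.exp (g a)) ^ n) := by
  classical
  set E := {ω | 0 ≤ ∑ k, g (Z k ω)}
  have hcover : E ⊆ ⋃ c : Fin n → α, {ω | ∀ k, Z k ω = c k} ∩ E := fun ω hω =>
    Set.mem_iUnion.2 ⟨fun k => Z k ω, fun _ => rfl, hω⟩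
  have hpiece (c : Fin n → α) : μ ({ω | ∀ k, Z k ω = c k} ∩ E)
      ≤ ENNReal.ofReal (∏ k, p (c k) * Real.exp (g (c k))) := by
    rcases ({ω | ∀ k, Z k ω = c k} ∩ E).eq_empty_or_nonempty with hempty | ⟨ω, hZc, hω⟩
    · simp [hempty]
    have hgc : 0 ≤ ∑ k, g (c k) := by
      simpa only [E, Set.mem_ofPred_eq, show ∀ k, Z k ω = c k from hZc] using hω
    refine (measure_mono Set.inter_subset_left).trans <| (hcyl c).trans <|
      ENNReal.ofReal_le_ofReal ?_
    rw [Finset.prod_mul_distrib, ← Real.exp_sum]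
    exact le_mul_of_one_le_right (Finset.prod_nonneg fun k _ => hp _) (Real.one_le_exp hgc)
  calc μ E ≤ ∑ c : Fin n → α, μ ({ω | ∀ k, Z k ω = c k} ∩ E) :=
        (measure_mono hcover).trans (measure_iUnion_fintype_le _ _)
    _ ≤ ∑ c : Fin n → α, ENNReal.ofReal (∏ k, p (c k) * Real.exp (g (c k))) :=
        Finset.sum_le_sum fun c _ => hpiece c
    _ = ENNReal.ofReal ((∑ a, p a * Real.exp (g a)) ^ n) := by
        rw [← ENNReal.ofReal_sum_of_nonneg fun c _ => Finset.prod_nonneg fun k _ =>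
          mul_nonneg (hp _) (Real.exp_nonneg _), Fintype.sum_pow]

end ProbabilityTheory

section Channel

variable {𝒳 𝒴 : Type*} [Fintype 𝒳] {pX : 𝒳 → ℝ} {W : 𝒳 → 𝒴 → ℝ}

lemma outDist_pos [Nonempty 𝒳] (hpX : ∀ x, 0 < pX x) (hW : ∀ x y, 0 < W x y) (y : 𝒴) :
    0 < outDist pX W y :=
  Finset.sum_pos (fun x _ => mul_pos (hpX x) (hW x y)) Finset.univ_nonempty

variable [Fintype 𝒴]

noncomputable def bhattacharyya (pX : 𝒳 → ℝ) (W : 𝒳 → 𝒴 → ℝ) : ℝ :=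
  ∑ x, pX x * ∑ y, √(W x y * outDist pX W y)

lemma sum_outDist (hpX : ∑ x, pX x = 1) (hW : ∀ x, ∑ y, W x y = 1) :
    ∑ y, outDist pX W y = 1 := by
  simp only [outDist]
  rw [Finset.sum_comm]
  simp only [← Finset.mul_sum, hW, mul_one, hpX]

lemma exists_ne_outDist (hC : 0 < ∑ x, ∑ y, pX x * W x y * infoDen pX W x y) :
    ∃ x, W x ≠ outDist pX W := by
  by_contra! h
  simp [infoDen, h] at hC

lemma bhattacharyya_pos [Nonempty 𝒳] [Nonempty 𝒴] (hpX : ∀ x, 0 < pX x)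
    (hW : ∀ x y, 0 < W x y) : 0 < bhattacharyya pX W :=
  Finset.sum_pos (fun x _ => mul_pos (hpX x) <| Finset.sum_pos (fun y _ =>
    Real.sqrt_pos.2 (mul_pos (hW x y) (outDist_pos hpX hW y))) Finset.univ_nonempty)
    Finset.univ_nonempty

lemma bhattacharyya_lt_one [Nonempty 𝒳] (hpX : ∀ x, 0 < pX x) (hpX1 : ∑ x, pX x = 1)
    (hW : ∀ x y, 0 < W x y) (hW1 : ∀ x, ∑ y, W x y = 1) (hne : ∃ x, W x ≠ outDist pX W) :
    bhattacharyya pX W < 1 := by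
  obtain ⟨x₀, hx₀⟩ := hne
  have hq := fun y => (outDist_pos hpX hW y).le
  have hq1 := sum_outDist hpX1 hW1
  calc bhattacharyya pX W < ∑ x, pX x * 1 :=
        Finset.sum_lt_sum (fun x _ => mul_le_mul_of_nonneg_left
          (Real.sum_sqrt_mul_le_one (fun y => (hW x y).le) hq (hW1 x) hq1) (hpX x).le)
          ⟨x₀, Finset.mem_univ _, mul_lt_mul_of_pos_left
            (Real.sum_sqrt_mul_lt_one (fun y => (hW x₀ y).le) hq (hW1 x₀) hq1 hx₀) (hpX x₀)⟩
    _ = 1 := by simp [hpX1]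

lemma sum_mul_exp_neg_half_infoDen [Nonempty 𝒳] (hpX : ∀ x, 0 < pX x) (hW : ∀ x y, 0 < W x y) :
    ∑ z : 𝒳 × 𝒴, pX z.1 * W z.1 z.2 * Real.exp (-infoDen pX W z.1 z.2 / 2)
      = bhattacharyya pX W := by
  simp only [bhattacharyya, Fintype.sum_prod_type, Finset.mul_sum, infoDen, ← Real.log_inv,
    inv_div, mul_assoc, Real.mul_exp_half_log_div (hW _ _) (outDist_pos hpX hW _)]

lemma sum_mul_exp_half_infoDen [Nonempty 𝒳] (hpX : ∀ x, 0 < pX x) (hW : ∀ x y, 0 < W x y) :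
    ∑ z : 𝒳 × 𝒴, pX z.1 * outDist pX W z.2 * Real.exp (infoDen pX W z.1 z.2 / 2)
      = bhattacharyya pX W := by
  simp only [bhattacharyya, Fintype.sum_prod_type, Finset.mul_sum, infoDen, mul_assoc,
    Real.mul_exp_half_log_div (outDist_pos hpX hW _) (hW _ _), mul_comm (outDist pX W _)]

end Channel

section InformationDensity

open Finset

variable {𝒳 𝒴 : Type*} [Fintype 𝒳] {pX : 𝒳 → ℝ} {W : 𝒳 → 𝒴 → ℝ}
  {Ω : Type*} [MeasurableSpace Ω] {μ : Measure Ω}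

lemma measure_eq_le_outDist {X : Ω → 𝒳} {Y : Ω → 𝒴} (hpX : ∀ x, 0 ≤ pX x)
    (hW : ∀ x y, 0 ≤ W x y)
    (hlaw : ∀ x y, μ {ω | X ω = x ∧ Y ω = y} = ENNReal.ofReal (pX x * W x y)) (y : 𝒴) :
    μ {ω | Y ω = y} ≤ ENNReal.ofReal (outDist pX W y) :=
  calc μ {ω | Y ω = y} ≤ μ (⋃ x ∈ univ, {ω | X ω = x ∧ Y ω = y}) :=
        measure_mono fun ω hω => by simpa using hω
    _ ≤ ∑ x, μ {ω | X ω = x ∧ Y ω = y} := measure_biUnion_finset_le _ _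
    _ = ENNReal.ofReal (outDist pX W y) := by
        simp only [hlaw, outDist]
        rw [ENNReal.ofReal_sum_of_nonneg fun x _ => mul_nonneg (hpX x) (hW x y)]

variable [MeasurableSpace 𝒳] [MeasurableSingletonClass 𝒳]
  [MeasurableSpace 𝒴] [MeasurableSingletonClass 𝒴] [Nonempty 𝒳]
  {X : ℕ → Ω → 𝒳} {Y : ℕ → Ω → 𝒴} {Xbar : ℕ → Ω → 𝒳}

lemma measure_forall_fin_eq_le_of_indepFun (hpX : ∀ x, 0 < pX x) (hW : ∀ x y, 0 < W x y)
    (hXY : iIndepFun (fun k ω => (X k ω, Y k ω)) μ)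
    (hXYlaw : ∀ k x y, μ {ω | X k ω = x ∧ Y k ω = y} = ENNReal.ofReal (pX x * W x y))
    (hXbar : iIndepFun Xbar μ) (hXbarlaw : ∀ k x, μ {ω | Xbar k ω = x} = ENNReal.ofReal (pX x))
    (hcross : IndepFun (fun ω (k : ℕ) => (X k ω, Y k ω)) (fun ω (k : ℕ) => Xbar k ω) μ)
    {n : ℕ} (c : Fin n → 𝒳 × 𝒴) :
    μ {ω | ∀ k : Fin n, (Xbar k ω, Y k ω) = c k}
      ≤ ENNReal.ofReal (∏ k, pX (c k).1 * outDist pX W (c k).2) := by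
  set A := {u : ℕ → 𝒳 × 𝒴 | ∀ k : Fin n, (u k).2 = (c k).2}
  set B := {v : ℕ → 𝒳 | ∀ k : Fin n, v k = (c k).1}
  have hA : MeasurableSet A := by
    simp only [A, Set.ofPred_forall]
    exact .iInter fun k =>
      (measurable_snd.comp (measurable_pi_apply _)) (measurableSet_singleton _)
  have hB : MeasurableSet B := by
    simp only [B, Set.ofPred_forall]
    exact .iInter fun k => (measurable_pi_apply _) (measurableSet_singleton _)
  have hYcyl :
      μ ((fun ω k => (X k ω, Y k ω)) ⁻¹' A) ≤ ENNReal.ofReal (∏ k, outDist pX W (c k).2) :=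
    hXY.measure_forall_fin_mem_le (s := fun k => Prod.snd ⁻¹' {(c k).2})
      (fun _ => measurable_snd (measurableSet_singleton _))
      (fun k => (outDist_pos hpX hW _).le)
      fun k => measure_eq_le_outDist (fun x => (hpX x).le) (fun x y => (hW x y).le) (hXYlaw k) _
  have hXbarcyl : μ ((fun ω k => Xbar k ω) ⁻¹' B) ≤ ENNReal.ofReal (∏ k, pX (c k).1) :=
    hXbar.measure_forall_fin_mem_le (s := fun k => {(c k).1}) (fun _ => measurableSet_singleton _)
      (fun k => (hpX _).le) fun k => (hXbarlaw _ _).le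
  have hset : {ω | ∀ k : Fin n, (Xbar k ω, Y k ω) = c k}
      = (fun ω k => (X k ω, Y k ω)) ⁻¹' A ∩ (fun ω k => Xbar k ω) ⁻¹' B := by
    ext ω
    simp only [Set.mem_ofPred_eq, Set.mem_inter_iff, Set.mem_preimage, A, B, Prod.ext_iff,
      forall_and]
    exact and_comm
  calc μ {ω | ∀ k : Fin n, (Xbar k ω, Y k ω) = c k}
      = μ ((fun ω k => (X k ω, Y k ω)) ⁻¹' A) * μ ((fun ω k => Xbar k ω) ⁻¹' B) := by
        rw [hset, hcross.measure_inter_preimage_eq_mul A B hA hB]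
    _ ≤ ENNReal.ofReal (∏ k, outDist pX W (c k).2) * ENNReal.ofReal (∏ k, pX (c k).1) :=
        mul_le_mul' hYcyl hXbarcyl
    _ = ENNReal.ofReal (∏ k, pX (c k).1 * outDist pX W (c k).2) := by
        rw [← ENNReal.ofReal_mul (prod_nonneg fun k _ => (outDist_pos hpX hW _).le),
          ← prod_mul_distrib]
        simp only [mul_comm]

variable [Fintype 𝒴]

lemma measure_sum_infoDen_nonpos_le (hpX : ∀ x, 0 < pX x) (hW : ∀ x y, 0 < W x y)
    (hXY : iIndepFun (fun k ω => (X k ω, Y k ω)) μ)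
    (hXYlaw : ∀ k x y, μ {ω | X k ω = x ∧ Y k ω = y} = ENNReal.ofReal (pX x * W x y)) (n : ℕ) :
    μ {ω | ∑ k ∈ range n, infoDen pX W (X k ω) (Y k ω) ≤ 0}
      ≤ ENNReal.ofReal (bhattacharyya pX W ^ n) := by
  have hp (z : 𝒳 × 𝒴) : 0 ≤ pX z.1 * W z.1 z.2 := (mul_pos (hpX _) (hW _ _)).le
  have hcyl (c : Fin n → 𝒳 × 𝒴) : μ {ω | ∀ k : Fin n, (X k ω, Y k ω) = c k}
      ≤ ENNReal.ofReal (∏ k, pX (c k).1 * W (c k).1 (c k).2) :=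
    hXY.measure_forall_fin_mem_le (s := fun k => {c k}) (fun _ => measurableSet_singleton _)
      (fun k => hp (c k)) fun k => by
        simpa only [Set.preimage, Set.mem_singleton_iff, Prod.ext_iff] using (hXYlaw _ _ _).le
  refine (measure_mono fun ω hω => ?_).trans <|
    (measure_sum_nonneg_le_of_cylinder hp hcyl fun z => -infoDen pX W z.1 z.2 / 2).trans_eq ?_
  · simp only [Set.mem_ofPred_eq] at hω ⊢
    rw [Fin.sum_univ_eq_sum_range (fun k => -infoDen pX W (X k ω) (Y k ω) / 2), ← sum_div,
      sum_neg_distrib]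
    linarith
  · rw [sum_mul_exp_neg_half_infoDen hpX hW]

lemma measure_sum_infoDen_pos_le (hpX : ∀ x, 0 < pX x) (hW : ∀ x y, 0 < W x y)
    (hXY : iIndepFun (fun k ω => (X k ω, Y k ω)) μ)
    (hXYlaw : ∀ k x y, μ {ω | X k ω = x ∧ Y k ω = y} = ENNReal.ofReal (pX x * W x y))
    (hXbar : iIndepFun Xbar μ) (hXbarlaw : ∀ k x, μ {ω | Xbar k ω = x} = ENNReal.ofReal (pX x))
    (hcross : IndepFun (fun ω (k : ℕ) => (X k ω, Y k ω)) (fun ω (k : ℕ) => Xbar k ω) μ)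
    (n : ℕ) :
    μ {ω | 0 < ∑ k ∈ range n, infoDen pX W (Xbar k ω) (Y k ω)}
      ≤ ENNReal.ofReal (bhattacharyya pX W ^ n) := by
  refine (measure_mono fun ω hω => ?_).trans <|
    (measure_sum_nonneg_le_of_cylinder (Z := fun (k : Fin n) ω => (Xbar k ω, Y k ω))
      (fun z => (mul_pos (hpX z.1) (outDist_pos hpX hW z.2)).le)
      (measure_forall_fin_eq_le_of_indepFun hpX hW hXY hXYlaw hXbar hXbarlaw hcross)
      fun z => infoDen pX W z.1 z.2 / 2).trans_eq ?_
  · simp only [Set.mem_ofPred_eq] at hω ⊢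
    rw [Fin.sum_univ_eq_sum_range (fun k => infoDen pX W (Xbar k ω) (Y k ω) / 2), ← sum_div]
    linarith
  · rw [sum_mul_exp_half_infoDen hpX hW]

end InformationDensity

theorem stmt5_general {𝒳 𝒴 : Type*} [Fintype 𝒳] [Nonempty 𝒳] [Fintype 𝒴] [Nonempty 𝒴]
    [MeasurableSpace 𝒳] [DiscreteMeasurableSpace 𝒳]
    [MeasurableSpace 𝒴] [DiscreteMeasurableSpace 𝒴]
    (pX : 𝒳 → ℝ) (hpXpos : ∀ x, 0 < pX x) (hpXsum : ∑ x, pX x = 1)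
    (W : 𝒳 → 𝒴 → ℝ) (hWpos : ∀ x y, 0 < W x y) (hWsum : ∀ x, ∑ y, W x y = 1)
    -- `P_{XY} ≠ P_X ⊗ P_Y`, equivalently `C = E[i(X₁;Y₁)] > 0`:
    (hC : 0 < ∑ x, ∑ y, pX x * W x y * infoDen pX W x y)
    {Ω : Type*} [MeasurableSpace Ω] (μ : Measure Ω)
    (X : ℕ → Ω → 𝒳) (Y : ℕ → Ω → 𝒴) (Xbar : ℕ → Ω → 𝒳)
    -- `((X_k, Y_k))_k` is an i.i.d. sequence with law `P_{XY}`: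
    (hXYindep : iIndepFun (fun k ω => (X k ω, Y k ω)) μ)
    (hXYlaw : ∀ k x y, μ {ω | X k ω = x ∧ Y k ω = y} = ENNReal.ofReal (pX x * W x y))
    -- `(X̄_k)_k` is an i.i.d. sequence with law `P_X`:
    (hXbarindep : iIndepFun Xbar μ)
    (hXbarlaw : ∀ k x, μ {ω | Xbar k ω = x} = ENNReal.ofReal (pX x))
    -- independent of `((X_k, Y_k))_k`:
    (hcross : IndepFun (fun ω (k : ℕ) => (X k ω, Y k ω)) (fun ω (k : ℕ) => Xbar k ω) μ) :
    ∃ ρ : ℝ, 0 < ρ ∧ ρ < 1 ∧ ∀ n : ℕ, 1 ≤ n →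
      μ {ω | (∑ k ∈ Finset.range n, infoDen pX W (X k ω) (Y k ω)) ≤ 0}
          ≤ ENNReal.ofReal (ρ ^ n)
      ∧ μ {ω | 0 < ∑ k ∈ Finset.range n, infoDen pX W (Xbar k ω) (Y k ω)}
          ≤ ENNReal.ofReal (ρ ^ n) := by
  refine ⟨bhattacharyya pX W, bhattacharyya_pos hpXpos hWpos,
    bhattacharyya_lt_one hpXpos hpXsum hWpos hWsum (exists_ne_outDist hC), fun n _ => ⟨?_, ?_⟩⟩
  · exact measure_sum_infoDen_nonpos_le hpXpos hWpos hXYindep hXYlaw n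
  · exact measure_sum_infoDen_pos_le hpXpos hWpos hXYindep hXYlaw hXbarindep hXbarlaw hcross n

/-- There exists `ρ ∈ (0,1)` such that for all `n ≥ 1`,
`P[Sₙ ≤ 0] ≤ ρⁿ` and `P[S̄ₙ > 0] ≤ ρⁿ`. -/
theorem stmt5 {𝒳 𝒴 : Type*} [Fintype 𝒳] [Nonempty 𝒳] [Fintype 𝒴] [Nonempty 𝒴]
    [MeasurableSpace 𝒳] [DiscreteMeasurableSpace 𝒳]
    [MeasurableSpace 𝒴] [DiscreteMeasurableSpace 𝒴]
    (pX : 𝒳 → ℝ) (hpXpos : ∀ x, 0 < pX x) (hpXsum : ∑ x, pX x = 1)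
    (W : 𝒳 → 𝒴 → ℝ) (hWpos : ∀ x y, 0 < W x y) (hWsum : ∀ x, ∑ y, W x y = 1)
    -- `P_{XY} ≠ P_X ⊗ P_Y`, equivalently `C = E[i(X₁;Y₁)] > 0`:
    (hC : 0 < ∑ x, ∑ y, pX x * W x y * infoDen pX W x y)
    {Ω : Type*} [MeasurableSpace Ω] (μ : Measure Ω) [IsProbabilityMeasure μ]
    (X : ℕ → Ω → 𝒳) (Y : ℕ → Ω → 𝒴) (Xbar : ℕ → Ω → 𝒳)
    (hXm : ∀ k, Measurable (X k)) (hYm : ∀ k, Measurable (Y k))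
    (hXbarm : ∀ k, Measurable (Xbar k))
    -- `((X_k, Y_k))_k` is an i.i.d. sequence with law `P_{XY}`:
    (hXYindep : iIndepFun (fun k ω => (X k ω, Y k ω)) μ)
    (hXYlaw : ∀ k x y, μ {ω | X k ω = x ∧ Y k ω = y} = ENNReal.ofReal (pX x * W x y))
    -- `(X̄_k)_k` is an i.i.d. sequence with law `P_X`:
    (hXbarindep : iIndepFun Xbar μ)
    (hXbarlaw : ∀ k x, μ {ω | Xbar k ω = x} = ENNReal.ofReal (pX x))
    -- independent of `((X_k, Y_k))_k`:
    (hcross : IndepFun (fun ω (k : ℕ) => (X k ω, Y k ω)) (fun ω (k : ℕ) => Xbar k ω) μ) :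
    ∃ ρ : ℝ, 0 < ρ ∧ ρ < 1 ∧ ∀ n : ℕ, 1 ≤ n →
      μ {ω | (∑ k ∈ Finset.range n, infoDen pX W (X k ω) (Y k ω)) ≤ 0}
          ≤ ENNReal.ofReal (ρ ^ n)
      ∧ μ {ω | 0 < ∑ k ∈ Finset.range n, infoDen pX W (Xbar k ω) (Y k ω)}
          ≤ ENNReal.ofReal (ρ ^ n) :=
  stmt5_general pX hpXpos hpXsum W hWpos hWsum hC μ X Y Xbar hXYindep hXYlaw hXbarindep hXbarlaw
    hcross
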